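/- (Gowers–Cauchy–Schwarz inequality for ℓ-box norms.) Let V be a nonempty finite set, let s ≥ 2 be an integer, let ℓ ≥ 2 be an even integer, and for every ω ∈ [ℓ]^s let F_ω : V^s → ℝ. Then |𝔼[∏_{ω∈[ℓ]^s} F_ω(π_ω(x)) | x ∈ V^{s×ℓ}]| ≤ ∏_{ω∈[ℓ]^s} ‖F_ω‖_{□_ℓ(V^s)}. -/

import Mathlib

open Finset

/-- The average of a real-valued function on a finite type. -/
noncomputable def avg (α : Type*) [Fintype α] (f : α → ℝ) : ℝ :=
  (∑ x, f x) / (Fintype.card α : ℝ)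

/-- The `ℓ`-box norm `‖F‖_{□_ℓ(V^s)}` of `F : V^s → ℝ`.  Here `V^{s×ℓ}` is modelled as
`Fin s → Fin ℓ → V`, an element `ω ∈ [ℓ]^s` as `ω : Fin s → Fin ℓ`, and the projection
`π_ω : V^{s×ℓ} → V^s` sends `x` to `fun i => x i (ω i)`.  The box norm `‖F‖_{□(V^s)}`
is the case `ℓ = 2`. -/
noncomputable def boxNorm (V : Type*) [Fintype V] (s ℓ : ℕ) (F : (Fin s → V) → ℝ) : ℝ :=
  (avg (Fin s → Fin ℓ → V) fun x =>
      ∏ ω : Fin s → Fin ℓ, F fun i => x i (ω i)) ^ (((ℓ : ℝ) ^ s)⁻¹)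

/-- The cut norm `‖F‖_{cut(V^s)}` of `F : V^s → ℝ`; the distinguished element `1^s` of
`[2]^s` is modelled as `fun _ => (0 : Fin 2)`. -/
noncomputable def cutNorm (V : Type*) [Fintype V] (s : ℕ) (F : (Fin s → V) → ℝ) : ℝ :=
  sSup {r : ℝ | ∃ H : (Fin s → Fin 2) → (Fin s → V) → ℝ,
    (∀ ω y, H ω y ∈ Set.Icc (-1 : ℝ) 1) ∧
    r = avg (Fin s → Fin 2 → V) fun x =>
      F (fun i => x i 0) *
        ∏ ω ∈ Finset.univ.filter (fun ω : Fin s → Fin 2 => ω ≠ fun _ => 0),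
          H ω fun i => x i (ω i)}

/-!
Split `x ∈ V^{s×ℓ}` into its `j`-th row `r ∈ V^ℓ` and the remaining rows `y`. For fixed `y` the
product over `ω` factors as `∏_k g_{y,k}(r_k)`, so the average over `r` is `∏_k 𝔼 g_{y,k}`.
Hölder's inequality with `ℓ` factors in `L^ℓ`, and the evenness of `ℓ` to drop absolute values,
give `|⟨F_ω⟩|^ℓ ≤ ∏_k ⟨F_{ω[j ↦ k]}⟩`: one step replaces the `j`-th coordinate of every index
by a constant. Doing this for each coordinate in turn makes every family constant, and the
`ℓ^s`-th root of the resulting inequality is the claim.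
-/

open Function
open scoped BigOperators

lemma avg_eq_expect (α : Type*) [Fintype α] (f : α → ℝ) : avg α f = 𝔼 a, f a :=
  (Fintype.expect_eq_sum_div_card f).symm

lemma prod_expect_eq_expect_prod {ι W : Type*} [Fintype ι] [DecidableEq ι] [Fintype W]
    (g : ι → W → ℝ) : ∏ i, 𝔼 w, g i w = 𝔼 u : ι → W, ∏ i, g i (u i) := by
  simp only [Fintype.expect_eq_sum_div_card, prod_div_distrib, Fintype.prod_sum, prod_const,
    card_univ, Fintype.card_fun, Nat.cast_pow]

lemma prod_le_expect_pow_card {ι : Type*} [Fintype ι] [Nonempty ι] (z : ι → ℝ)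
    (hz : ∀ i, 0 ≤ z i) : ∏ i, z i ≤ 𝔼 i, z i ^ Fintype.card ι := by
  set n := Fintype.card ι
  have hn : n ≠ 0 := Fintype.card_ne_zero
  have amgm := Real.geom_mean_le_arith_mean_weighted univ (fun _ => (n : ℝ)⁻¹)
    (fun i => z i ^ n) (fun _ _ => by positivity) (by simp [n, hn])
    (fun i _ => pow_nonneg (hz i) n)
  simp only [Real.pow_rpow_inv_natCast (hz _) hn, ← mul_sum] at amgm
  rwa [Fintype.expect_eq_sum_div_card, div_eq_inv_mul]

lemma expect_prod_pow_card_le {ι Y : Type*} [Fintype ι] [Fintype Y] (A : ι → Y → ℝ)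
    (hA : ∀ i y, 0 ≤ A i y) :
    (𝔼 y, ∏ i, A i y) ^ Fintype.card ι ≤ ∏ i, 𝔼 y, A i y ^ Fintype.card ι := by
  rcases isEmpty_or_nonempty ι with hι | hι
  · simp
  set n := Fintype.card ι
  have hn : n ≠ 0 := Fintype.card_ne_zero
  have hmoment : ∀ i, 0 ≤ 𝔼 y, A i y ^ n := fun i =>
    expect_nonneg fun y _ => pow_nonneg (hA i y) n
  by_cases! hzero : ∃ i, 𝔼 y, A i y ^ n = 0
  · obtain ⟨i, hi⟩ := hzero
    have hAi : ∀ y, A i y = 0 := fun y => pow_eq_zero_iff hn |>.1 <|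
      (expect_eq_zero_iff_of_nonneg fun y _ => pow_nonneg (hA i y) n).1 hi y (mem_univ y)
    have hprod : ∀ y, ∏ i, A i y = 0 := fun y => prod_eq_zero (mem_univ i) (hAi y)
    simp only [hprod, expect_const_zero, zero_pow hn]
    exact prod_nonneg fun i _ => hmoment i
  -- Normalise each `A i` by its `L^n` norm `c i`; then AM-GM bounds the average by `1`.
  set c : ι → ℝ := fun i => (𝔼 y, A i y ^ n) ^ (n⁻¹ : ℝ)
  have hc : ∀ i, 0 < c i := fun i => Real.rpow_pos_of_pos ((hmoment i).lt_of_ne' (hzero i)) _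
  have hc_pow : ∀ i, c i ^ n = 𝔼 y, A i y ^ n := fun i =>
    Real.rpow_inv_natCast_pow (hmoment i) hn
  have hnormalised : 𝔼 y, ∏ i, A i y / c i ≤ 1 := calc
    𝔼 y, ∏ i, A i y / c i ≤ 𝔼 y, 𝔼 i, (A i y / c i) ^ n :=
      expect_le_expect fun y _ =>
        prod_le_expect_pow_card _ fun i => div_nonneg (hA i y) (hc i).le
    _ = 𝔼 i, (𝔼 y, A i y ^ n) / c i ^ n := by
      rw [expect_comm]; simp only [div_pow, expect_div]
    _ = 1 := by simp [hc_pow, hzero]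
  have hholder : 𝔼 y, ∏ i, A i y ≤ ∏ i, c i := calc
    𝔼 y, ∏ i, A i y = (∏ i, c i) * 𝔼 y, ∏ i, A i y / c i := by
      rw [mul_expect]
      refine expect_congr rfl fun y _ => ?_
      rw [prod_div_distrib, mul_div_cancel₀ _ (prod_pos fun i _ => hc i).ne']
    _ ≤ ∏ i, c i := mul_le_of_le_one_right (prod_pos fun i _ => hc i).le hnormalised
  calc (𝔼 y, ∏ i, A i y) ^ n ≤ (∏ i, c i) ^ n :=
        pow_le_pow_left₀ (expect_nonneg fun y _ => prod_nonneg fun i _ => hA i y) hholder n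
    _ = ∏ i, 𝔼 y, A i y ^ n := by
      rw [← prod_pow]; exact prod_congr rfl fun i _ => hc_pow i

section BoxInner

variable {ι K V : Type*} [DecidableEq ι]

lemma update_funSplitAt_symm (j : ι) (k k' : K) (τ : {i // i ≠ j} → K) :
    update ((Equiv.funSplitAt j K).symm (k, τ)) j k' = (Equiv.funSplitAt j K).symm (k', τ) := by
  funext i
  rcases eq_or_ne i j with rfl | h <;> simp [update_of_ne, *]

lemma piecewise_update_of_notMem {T : Finset ι} {j : ι} (hj : j ∉ T) (κ ω : ι → K) (k : K) :
    T.piecewise κ (update ω j k) = (insert j T).piecewise (update κ j k) ω := by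
  funext i
  rcases eq_or_ne i j with rfl | h
  · simp [hj]
  · by_cases hi : i ∈ T <;> simp [h, hi]

variable [Fintype ι] [Fintype K]

lemma prod_prod_update {M : Type*} [CommMonoid M] (j : ι) (φ : (ι → K) → M) :
    ∏ κ, ∏ k, φ (update κ j k) = (∏ κ, φ κ) ^ Fintype.card K := by
  let e := (Equiv.funSplitAt j K).symm
  have hsplit : ∀ ψ : (ι → K) → M, ∏ κ, ψ κ = ∏ k, ∏ τ, ψ (e (k, τ)) := fun ψ =>
    (e.prod_comp ψ).symm.trans (Fintype.prod_prod_type _)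
  simp only [hsplit, update_funSplitAt_symm, e, prod_const, card_univ]
  rw [prod_comm]

variable [DecidableEq K] [Fintype V]

/-- The Gowers inner product `⟨G_ω⟩` of a family indexed by `ω ∈ K^ι`. -/
noncomputable def boxInner (G : (ι → K) → (ι → V) → ℝ) : ℝ :=
  𝔼 x : ι → K → V, ∏ ω, G ω fun i => x i (ω i)

/-- With the rows of `x` other than the `j`-th frozen to `y`, the factor of the product over `ω`
that depends on the entry `x j k = v` only. -/
noncomputable def sliceFactor (G : (ι → K) → (ι → V) → ℝ) (j : ι)
    (y : {i // i ≠ j} → K → V) (k : K) (v : V) : ℝ :=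
  ∏ τ : {i // i ≠ j} → K,
    G ((Equiv.funSplitAt j K).symm (k, τ)) ((Equiv.funSplitAt j V).symm (v, fun i => y i (τ i)))

lemma boxInner_eq_expect_prod_expect_sliceFactor (G : (ι → K) → (ι → V) → ℝ) (j : ι) :
    boxInner G = 𝔼 y, ∏ k, 𝔼 v, sliceFactor G j y k v := by
  have hsplit : ∀ r y, (∏ ω, G ω fun i => (Equiv.funSplitAt j (K → V)).symm (r, y) i (ω i)) =
      ∏ k, sliceFactor G j y k (r k) := by
    intro r y
    rw [← (Equiv.funSplitAt j K).symm.prod_comp, Fintype.prod_prod_type]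
    refine prod_congr rfl fun k _ => prod_congr rfl fun τ _ => congrArg _ ?_
    funext i
    rcases eq_or_ne i j with rfl | h <;> simp [*]
  rw [boxInner, Fintype.expect_equiv (Equiv.funSplitAt j (K → V)) _
    (fun p => ∏ k, sliceFactor G j p.2 k (p.1 k)) fun x => by
      rw [← hsplit, Equiv.symm_apply_apply], ← univ_product_univ, expect_product, expect_comm]
  refine expect_congr rfl fun y _ => ?_
  rw [prod_expect_eq_expect_prod]

lemma boxInner_update (G : (ι → K) → (ι → V) → ℝ) (j : ι) (k₀ : K) :
    boxInner (fun ω => G (update ω j k₀)) =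
      𝔼 y, (𝔼 v, sliceFactor G j y k₀ v) ^ Fintype.card K := by
  rw [boxInner_eq_expect_prod_expect_sliceFactor _ j]
  simp only [sliceFactor, update_funSplitAt_symm, prod_const, card_univ]

lemma boxInner_update_nonneg (hK : Even (Fintype.card K)) (G : (ι → K) → (ι → V) → ℝ)
    (j : ι) (k₀ : K) : 0 ≤ boxInner (fun ω => G (update ω j k₀)) := by
  rw [boxInner_update]
  exact expect_nonneg fun y _ => hK.pow_nonneg _

lemma abs_boxInner_pow_card_le (hK : Even (Fintype.card K)) (G : (ι → K) → (ι → V) → ℝ)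
    (j : ι) : |boxInner G| ^ Fintype.card K ≤ ∏ k, boxInner (fun ω => G (update ω j k)) := by
  simp only [boxInner_update, boxInner_eq_expect_prod_expect_sliceFactor G j]
  set a : K → _ → ℝ := fun k y => 𝔼 v, sliceFactor G j y k v
  calc |𝔼 y, ∏ k, a k y| ^ Fintype.card K ≤ (𝔼 y, ∏ k, |a k y|) ^ Fintype.card K := by
        gcongr
        simpa only [abs_prod] using abs_expect_le univ fun y => ∏ k, a k y
    _ ≤ ∏ k, 𝔼 y, |a k y| ^ Fintype.card K :=
        expect_prod_pow_card_le _ fun _ _ => abs_nonneg _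
    _ = ∏ k, 𝔼 y, a k y ^ Fintype.card K := by simp only [hK.pow_abs]

lemma abs_boxInner_pow_le_prod_piecewise [Nonempty K] (hK : Even (Fintype.card K))
    (G : (ι → K) → (ι → V) → ℝ) (T : Finset ι) :
    |boxInner G| ^ Fintype.card (ι → K) ≤ ∏ κ, |boxInner fun ω => G (T.piecewise κ ω)| := by
  induction T using Finset.induction_on with
  | empty => simp
  | insert j T hj ih =>
    set φ : (ι → K) → ℝ := fun κ => |boxInner fun ω => G ((insert j T).piecewise κ ω)|
    have hstep : ∀ κ, |boxInner fun ω => G (T.piecewise κ ω)| ^ Fintype.card K ≤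
        ∏ k, φ (update κ j k) := fun κ => by
      set H := fun ω => G (T.piecewise κ ω)
      refine (abs_boxInner_pow_card_le hK H j).trans (prod_le_prod
        (fun k _ => boxInner_update_nonneg hK H j k) fun k _ => ?_)
      simp only [H, piecewise_update_of_notMem hj, φ]
      exact le_abs_self _
    have hpow : (|boxInner G| ^ Fintype.card (ι → K)) ^ Fintype.card K ≤
        (∏ κ, φ κ) ^ Fintype.card K := calc
      _ ≤ (∏ κ, |boxInner fun ω => G (T.piecewise κ ω)|) ^ Fintype.card K := by gcongr
      _ ≤ ∏ κ, ∏ k, φ (update κ j k) := by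
        rw [← prod_pow]; exact prod_le_prod (fun _ _ => by positivity) fun κ _ => hstep κ
      _ = (∏ κ, φ κ) ^ Fintype.card K := prod_prod_update j φ
    exact (pow_le_pow_iff_left₀ (by positivity) (prod_nonneg fun _ _ => abs_nonneg _)
      Fintype.card_ne_zero).1 hpow

lemma boxInner_const_nonneg [Nonempty ι] [Nonempty K] (hK : Even (Fintype.card K))
    (f : (ι → V) → ℝ) : 0 ≤ boxInner fun _ : ι → K => f :=
  boxInner_update_nonneg hK (fun _ => f) (Classical.arbitrary ι) (Classical.arbitrary K)

lemma abs_boxInner_le_prod_rpow [Nonempty ι] [Nonempty K] (hK : Even (Fintype.card K))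
    (F : (ι → K) → (ι → V) → ℝ) :
    |boxInner F| ≤ ∏ κ, (boxInner fun _ : ι → K => F κ) ^ ((Fintype.card (ι → K) : ℝ)⁻¹) := by
  set N := Fintype.card (ι → K)
  have hN : N ≠ 0 := Fintype.card_ne_zero
  have hpow : |boxInner F| ^ N ≤ ∏ κ, boxInner fun _ : ι → K => F κ := by
    simpa only [piecewise_univ, abs_of_nonneg (boxInner_const_nonneg hK _)] using
      abs_boxInner_pow_le_prod_piecewise hK F univ
  calc |boxInner F| = (|boxInner F| ^ N) ^ (N⁻¹ : ℝ) :=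
        (Real.pow_rpow_inv_natCast (abs_nonneg _) hN).symm
    _ ≤ (∏ κ, boxInner fun _ : ι → K => F κ) ^ (N⁻¹ : ℝ) := by gcongr
    _ = _ := (Real.finsetProd_rpow _ _ (fun κ _ => boxInner_const_nonneg hK _) _).symm

end BoxInner

theorem stmt14_general (V : Type) [Fintype V] (s : ℕ) (hs : 2 ≤ s)
    (ℓ : ℕ) (hℓ2 : 2 ≤ ℓ) (hℓ : Even ℓ)
    (F : (Fin s → Fin ℓ) → (Fin s → V) → ℝ) :
    |avg (Fin s → Fin ℓ → V) fun x => ∏ ω : Fin s → Fin ℓ, F ω fun i => x i (ω i)|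
      ≤ ∏ ω : Fin s → Fin ℓ, boxNorm V s ℓ (F ω) := by
  have : Nonempty (Fin s) := ⟨⟨0, by omega⟩⟩
  have : Nonempty (Fin ℓ) := ⟨⟨0, by omega⟩⟩
  have h := abs_boxInner_le_prod_rpow (V := V) (by simpa using hℓ) F
  simpa only [boxNorm, avg_eq_expect, boxInner, Fintype.card_fun, Fintype.card_fin,
    Nat.cast_pow] using h

/-- The Gowers–Cauchy–Schwarz inequality for `ℓ`-box norms. -/
theorem stmt14 (V : Type) [Fintype V] [Nonempty V] (s : ℕ) (hs : 2 ≤ s)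
    (ℓ : ℕ) (hℓ2 : 2 ≤ ℓ) (hℓ : Even ℓ)
    (F : (Fin s → Fin ℓ) → (Fin s → V) → ℝ) :
    |avg (Fin s → Fin ℓ → V) fun x => ∏ ω : Fin s → Fin ℓ, F ω fun i => x i (ω i)|
      ≤ ∏ ω : Fin s → Fin ℓ, boxNorm V s ℓ (F ω) :=
  stmt14_general V s hs ℓ hℓ2 hℓ F
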